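/- arXiv:math/0309371 — 5 statements merged into one kernel-verified Lean document; each statement's English description precedes it below -/
import Mathlib

section
/- Suppose S_1,…,S_n are bounded operators on H_n and μ_{i,w} are complex scalars with S_i ξ_w = μ_{i,w} ξ_{wi} for all words w and all 1 ≤ i ≤ n. Then T_i S_j = S_j T_i for all 1 ≤ i, j ≤ n if and only if μ_{i,w} = μ_{i,e} · W(i,w) · W(e,w)^{-1} for every word w in F_n^+ and every 1 ≤ i ≤ n. -/
noncomputable section

/-- Auxiliary recursion for the weight function: `W(u, []) = 1` and, reading the word
`w = i_k ⋯ i_1` as the list `[i_k, …, i_1]`,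
`W(u, i :: w) = λ_{i, w·u} · W(u, w)`, so that
`W(u, i_k⋯i_1) = λ_{i_1,u} · λ_{i_2, i_1 u} ⋯ λ_{i_k, i_{k-1}⋯i_1 u}`. -/
def Waux {n : ℕ} (lam : Fin n → FreeMonoid (Fin n) → ℝ) (u : FreeMonoid (Fin n)) :
    List (Fin n) → ℝ
  | [] => 1
  | i :: w => lam i (FreeMonoid.ofList w * u) * Waux lam u w

/-- The weight function `W : F_n^+ × F_n^+ → ℝ` associated to the weights `λ_{i,w}`. -/
def Wfun {n : ℕ} (lam : Fin n → FreeMonoid (Fin n) → ℝ) (u w : FreeMonoid (Fin n)) : ℝ :=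
  Waux lam u (FreeMonoid.toList w)

instance {n : ℕ} : DecidableEq (FreeMonoid (Fin n)) := Classical.decEq _

/-- `n`-variable Fock space `H_n = ℓ²(F_n^+)`. -/
abbrev Hn (n : ℕ) : Type := lp (fun _ : FreeMonoid (Fin n) => ℂ) 2

/-- The standard orthonormal basis vector `ξ_w` of `H_n`. -/
def xi {n : ℕ} (w : FreeMonoid (Fin n)) : Hn n := lp.single 2 w 1

/-!
Evaluated on a basis vector `ξ_w`, both `T_i S_j` and `S_j T_i` are multiples of `ξ_{iwj}`, so the
commutation relations amount to the scalar identities `μ_{j,w} λ_{i,wj} = λ_{i,w} μ_{j,iw}`.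
Since `W(e, iw) = λ_{i,w} W(e,w)` and `W(j, iw) = λ_{i,wj} W(j,w)`, these say exactly that
`μ_{j,w} W(e,w) / W(j,w)` is unchanged by prepending a letter to `w`, i.e. that it is constant,
equal to its value `μ_{j,e}` at the empty word.
-/

theorem FreeMonoid.forall_eq_one_iff_forall_of_mul {α β : Type*} (f : FreeMonoid α → β) :
    (∀ a w, f (FreeMonoid.of a * w) = f w) ↔ ∀ w, f w = f 1 := by
  refine ⟨fun h w => ?_, fun h a w => by rw [h, h w]⟩
  induction w using FreeMonoid.inductionOn' with
  | one => rfl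
  | of_mul a w ih => rw [h, ih]

section Weights

variable {n : ℕ} (lam : Fin n → FreeMonoid (Fin n) → ℝ)

@[simp]
theorem Wfun_one_right (u : FreeMonoid (Fin n)) : Wfun lam u 1 = 1 := rfl

theorem Wfun_of_mul (u w : FreeMonoid (Fin n)) (i : Fin n) :
    Wfun lam u (FreeMonoid.of i * w) = lam i (w * u) * Wfun lam u w := by
  simp [Wfun, Waux]

theorem Wfun_pos (hpos : ∀ i w, 0 < lam i w) (u w : FreeMonoid (Fin n)) : 0 < Wfun lam u w := by
  induction w using FreeMonoid.inductionOn' with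
  | one => exact one_pos
  | of_mul i w ih => rw [Wfun_of_mul]; exact mul_pos (hpos _ _) ih

def normalizedWeight (mu : FreeMonoid (Fin n) → ℂ) (j : Fin n) (w : FreeMonoid (Fin n)) : ℂ :=
  mu w * Wfun lam 1 w * (Wfun lam (FreeMonoid.of j) w : ℂ)⁻¹

variable {lam} (hpos : ∀ i w, 0 < lam i w) (mu : FreeMonoid (Fin n) → ℂ) (j : Fin n)
include hpos

theorem normalizedWeight_of_mul_eq_iff (i : Fin n) (w : FreeMonoid (Fin n)) :
    normalizedWeight lam mu j (FreeMonoid.of i * w) = normalizedWeight lam mu j w ↔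
      mu w * lam i (w * FreeMonoid.of j) = lam i w * mu (FreeMonoid.of i * w) := by
  have h1 : (Wfun lam 1 w : ℂ) ≠ 0 := mod_cast (Wfun_pos lam hpos 1 w).ne'
  have hj : (Wfun lam (FreeMonoid.of j) w : ℂ) ≠ 0 := mod_cast (Wfun_pos lam hpos _ w).ne'
  have hij : (lam i (w * FreeMonoid.of j) : ℂ) ≠ 0 := mod_cast (hpos _ _).ne'
  simp only [normalizedWeight, Wfun_of_mul, mul_one]
  push_cast
  field_simp
  exact eq_comm

theorem normalizedWeight_eq_one_iff (w : FreeMonoid (Fin n)) :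
    normalizedWeight lam mu j w = normalizedWeight lam mu j 1 ↔
      mu w = mu 1 * Wfun lam (FreeMonoid.of j) w * (Wfun lam 1 w : ℂ)⁻¹ := by
  have h1 : (Wfun lam 1 w : ℂ) ≠ 0 := mod_cast (Wfun_pos lam hpos 1 w).ne'
  have hj : (Wfun lam (FreeMonoid.of j) w : ℂ) ≠ 0 := mod_cast (Wfun_pos lam hpos _ w).ne'
  simp only [normalizedWeight, Wfun_one_right]
  push_cast
  field_simp

end Weights

theorem lp.continuousLinearMap_ext {ι E : Type*} [DecidableEq ι] [AddCommMonoid E]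
    [TopologicalSpace E] [Module ℂ E] [T2Space E] {A B : lp (fun _ : ι => ℂ) 2 →L[ℂ] E}
    (h : ∀ i, A (lp.single 2 i 1) = B (lp.single 2 i 1)) : A = B := by
  ext f
  have hf := lp.hasSum_single (by norm_num) f
  have hAB : ∀ i, A (lp.single 2 i (f i)) = B (lp.single 2 i (f i)) := fun i => by
    rw [← mul_one (f i), ← smul_eq_mul, lp.single_smul, map_smul, map_smul, h]
  exact (hf.map A A.continuous).unique
    (by simpa only [Function.comp_def, hAB] using hf.map B B.continuous)

section Shifts

variable {n : ℕ}

theorem smul_xi_inj {c d : ℂ} {w : FreeMonoid (Fin n)} : c • xi w = d • xi w ↔ c = d := by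
  refine ⟨fun h => ?_, fun h => h ▸ rfl⟩
  simpa [xi, lp.single_apply_self] using congrArg (fun f : Hn n => f w) h

variable {lam : Fin n → FreeMonoid (Fin n) → ℝ} {T : Fin n → (Hn n →L[ℂ] Hn n)}
  {mu : Fin n → FreeMonoid (Fin n) → ℂ} {S : Fin n → (Hn n →L[ℂ] Hn n)}

theorem commute_iff_weights
    (hT : ∀ i w, T i (xi w) = (lam i w : ℂ) • xi (FreeMonoid.of i * w))
    (hS : ∀ i w, S i (xi w) = mu i w • xi (w * FreeMonoid.of i)) (i j : Fin n) :
    T i * S j = S j * T i ↔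
      ∀ w, mu j w * lam i (w * FreeMonoid.of j) = lam i w * mu j (FreeMonoid.of i * w) := by
  have hTS : ∀ w, (T i * S j) (xi w) = (mu j w * lam i (w * FreeMonoid.of j)) •
      xi (FreeMonoid.of i * w * FreeMonoid.of j) := fun w => by
    rw [mul_apply_eq_comp, hS, map_smul, hT, smul_smul, mul_assoc]
  have hST : ∀ w, (S j * T i) (xi w) = (lam i w * mu j (FreeMonoid.of i * w)) •
      xi (FreeMonoid.of i * w * FreeMonoid.of j) := fun w => by
    rw [mul_apply_eq_comp, hT, map_smul, hS, smul_smul]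
  refine ⟨fun h w => ?_, fun h => lp.continuousLinearMap_ext fun w => ?_⟩
  · rw [← smul_xi_inj, ← hTS, ← hST, h]
  · change (T i * S j) (xi w) = (S j * T i) (xi w)
    rw [hTS, hST, h]

end Shifts

theorem commuting_iff_right_weights_general (n : ℕ)
    (lam : Fin n → FreeMonoid (Fin n) → ℝ)
    (hpos : ∀ i w, 0 < lam i w)
    (T : Fin n → (Hn n →L[ℂ] Hn n))
    (hT : ∀ i w, T i (xi w) = (lam i w : ℂ) • xi (FreeMonoid.of i * w))
    (S : Fin n → (Hn n →L[ℂ] Hn n)) (mu : Fin n → FreeMonoid (Fin n) → ℂ)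
    (hS : ∀ i w, S i (xi w) = mu i w • xi (w * FreeMonoid.of i)) :
    (∀ i j, T i * S j = S j * T i) ↔
      (∀ i w, mu i w = mu i 1 * (Wfun lam (FreeMonoid.of i) w : ℂ) *
        ((Wfun lam 1 w : ℂ))⁻¹) := by
  calc (∀ i j, T i * S j = S j * T i)
      ↔ ∀ j i w, mu j w * lam i (w * FreeMonoid.of j) =
          lam i w * mu j (FreeMonoid.of i * w) := by
        simp only [commute_iff_weights hT hS]
        exact forall_comm
    _ ↔ ∀ j i w, normalizedWeight lam (mu j) j (FreeMonoid.of i * w) =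
          normalizedWeight lam (mu j) j w := by
        simp only [normalizedWeight_of_mul_eq_iff hpos]
    _ ↔ ∀ j w, normalizedWeight lam (mu j) j w = normalizedWeight lam (mu j) j 1 :=
        forall_congr' fun j => FreeMonoid.forall_eq_one_iff_forall_of_mul _
    _ ↔ _ := by simp only [normalizedWeight_eq_one_iff hpos]

/-- If `S_1, …, S_n` are bounded operators on `H_n` with
`S_i ξ_w = μ_{i,w} ξ_{wi}`, then `T_i S_j = S_j T_i` for all `i, j` if and only if
`μ_{i,w} = μ_{i,e} · W(i,w) · W(e,w)⁻¹` for every word `w` and every `i`. -/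
theorem commuting_iff_right_weights (n : ℕ) (hn : 2 ≤ n)
    (lam : Fin n → FreeMonoid (Fin n) → ℝ)
    (hpos : ∀ i w, 0 < lam i w) (hbdd : ∃ C : ℝ, ∀ i w, lam i w ≤ C)
    (T : Fin n → (Hn n →L[ℂ] Hn n))
    (hT : ∀ i w, T i (xi w) = (lam i w : ℂ) • xi (FreeMonoid.of i * w))
    (S : Fin n → (Hn n →L[ℂ] Hn n)) (mu : Fin n → FreeMonoid (Fin n) → ℂ)
    (hS : ∀ i w, S i (xi w) = mu i w • xi (w * FreeMonoid.of i)) :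
    (∀ i j, T i * S j = S j * T i) ↔
      (∀ i w, mu i w = mu i 1 * (Wfun lam (FreeMonoid.of i) w : ℂ) *
        ((Wfun lam 1 w : ℂ))⁻¹) :=
  commuting_iff_right_weights_general n lam hpos T hT S mu hS
end
end

section
/- A point λ = (λ_1,…,λ_n) ∈ ℂ^n is an eigenvalue for the adjoint tuple if and only if the series Σ over all words w in F_n^+ of |w(λ)|² · W(e,w)^{-2} converges. -/
noncomputable section

/-- `w(λ) = λ_{i_1} ⋯ λ_{i_k}` for a word `w = i_1 ⋯ i_k`, with `e(λ) = 1`. -/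
def wl {n : ℕ} (l : Fin n → ℂ) (w : FreeMonoid (Fin n)) : ℂ :=
  ((FreeMonoid.toList w).map l).prod

/-! Coordinatewise, `T_i^* ξ = conj(λ_i) ξ` says `λ_{i,w} ξ(iw) = conj(λ_i) ξ(w)`. This recursion
along words forces `ξ(w) = ξ(e) · conj(w(λ)) / W(e,w)`, so a joint eigenvector exists exactly when
this sequence is square-summable. -/

open FreeMonoid ContinuousLinearMap

theorem memℓp_two_iff_summable_sq {α : Type*} {E : α → Type*} [∀ i, NormedAddCommGroup (E i)]
    {f : ∀ i, E i} : Memℓp f 2 ↔ Summable fun i => ‖f i‖ ^ 2 := by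
  rw [memℓp_gen_iff (by norm_num)]
  norm_num

namespace WeightedShift

variable {n : ℕ} {lam : Fin n → FreeMonoid (Fin n) → ℝ} {l : Fin n → ℂ}

lemma Waux_pos (hpos : ∀ i w, 0 < lam i w) (u : FreeMonoid (Fin n)) :
    ∀ L : List (Fin n), 0 < Waux lam u L
  | [] => one_pos
  | _ :: L => mul_pos (hpos _ _) (Waux_pos hpos u L)

lemma Wfun_pos (hpos : ∀ i w, 0 < lam i w) (u w : FreeMonoid (Fin n)) : 0 < Wfun lam u w :=
  Waux_pos hpos u _

lemma Wfun_one_of_mul (i : Fin n) (w : FreeMonoid (Fin n)) :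
    Wfun lam 1 (of i * w) = lam i w * Wfun lam 1 w := by
  simp [Wfun, Waux]

lemma wl_of_mul (i : Fin n) (w : FreeMonoid (Fin n)) : wl l (of i * w) = l i * wl l w := by
  simp [wl]

/-- The joint eigenvector of the `T_i^*`, normalised by `ξ e = 1`. -/
def eigenCoeff (lam : Fin n → FreeMonoid (Fin n) → ℝ) (l : Fin n → ℂ) (w : FreeMonoid (Fin n)) :
    ℂ :=
  starRingEnd ℂ (wl l w) / Wfun lam 1 w

lemma eigenCoeff_one : eigenCoeff lam l 1 = 1 := by
  simp [eigenCoeff, wl, Wfun, Waux]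

lemma mul_eigenCoeff_of_mul (hpos : ∀ i w, 0 < lam i w) (i : Fin n) (w : FreeMonoid (Fin n)) :
    lam i w * eigenCoeff lam l (of i * w) = starRingEnd ℂ (l i) * eigenCoeff lam l w := by
  have hlam : (lam i w : ℂ) ≠ 0 := by exact_mod_cast (hpos i w).ne'
  have hW : (Wfun lam 1 w : ℂ) ≠ 0 := by exact_mod_cast (Wfun_pos hpos 1 w).ne'
  rw [eigenCoeff, eigenCoeff, wl_of_mul, Wfun_one_of_mul, map_mul]
  push_cast
  field_simp

lemma norm_eigenCoeff_sq (hpos : ∀ i w, 0 < lam i w) (w : FreeMonoid (Fin n)) :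
    ‖eigenCoeff lam l w‖ ^ 2 = ‖wl l w‖ ^ 2 * ((Wfun lam 1 w) ^ 2)⁻¹ := by
  rw [eigenCoeff, norm_div, RCLike.norm_conj, Complex.norm_real,
    Real.norm_of_nonneg (Wfun_pos hpos 1 w).le, div_pow, div_eq_mul_inv]

lemma eq_mul_eigenCoeff (hpos : ∀ i w, 0 < lam i w) {f : FreeMonoid (Fin n) → ℂ}
    (hf : ∀ i w, lam i w * f (of i * w) = starRingEnd ℂ (l i) * f w) (w : FreeMonoid (Fin n)) :
    f w = f 1 * eigenCoeff lam l w := by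
  induction w using FreeMonoid.inductionOn' with
  | one => rw [eigenCoeff_one, mul_one]
  | of_mul i w ih =>
    have hlam : (lam i w : ℂ) ≠ 0 := by exact_mod_cast (hpos i w).ne'
    apply mul_left_cancel₀ hlam
    rw [hf, ih, mul_left_comm, ← mul_eigenCoeff_of_mul hpos, mul_left_comm]

lemma apply_eq_inner_xi (η : Hn n) (w : FreeMonoid (Fin n)) : η w = inner ℂ (xi w) η := by
  rw [xi, lp.inner_single_left, RCLike.inner_apply, map_one, mul_one]

variable {T : Fin n → (Hn n →L[ℂ] Hn n)}

lemma adjoint_apply_xi (hT : ∀ i w, T i (xi w) = (lam i w : ℂ) • xi (of i * w))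
    (ξ : Hn n) (i : Fin n) (w : FreeMonoid (Fin n)) :
    adjoint (T i) ξ w = lam i w * ξ (of i * w) := by
  rw [apply_eq_inner_xi, adjoint_inner_right, hT, inner_smul_left, ← apply_eq_inner_xi,
    Complex.conj_ofReal]

lemma adjoint_eq_smul_iff (hT : ∀ i w, T i (xi w) = (lam i w : ℂ) • xi (of i * w)) (ξ : Hn n) :
    (∀ i, adjoint (T i) ξ = starRingEnd ℂ (l i) • ξ) ↔
      ∀ i w, lam i w * ξ (of i * w) = starRingEnd ℂ (l i) * ξ w := by
  simp only [lp.ext_iff, funext_iff, lp.coeFn_smul, Pi.smul_apply, smul_eq_mul,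
    adjoint_apply_xi hT]

end WeightedShift

open WeightedShift in
theorem eigenvalue_iff_summable_general (n : ℕ)
    (lam : Fin n → FreeMonoid (Fin n) → ℝ)
    (hpos : ∀ i w, 0 < lam i w)
    (T : Fin n → (Hn n →L[ℂ] Hn n))
    (hT : ∀ i w, T i (xi w) = (lam i w : ℂ) • xi (FreeMonoid.of i * w))
    (l : Fin n → ℂ) :
    (∃ ξ : Hn n, ξ ≠ 0 ∧
        ∀ i, ContinuousLinearMap.adjoint (T i) ξ = (starRingEnd ℂ) (l i) • ξ) ↔
      Summable (fun w : FreeMonoid (Fin n) => ‖wl l w‖ ^ 2 * ((Wfun lam 1 w) ^ 2)⁻¹) := by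
  simp only [adjoint_eq_smul_iff hT, ← norm_eigenCoeff_sq hpos, ← memℓp_two_iff_summable_sq]
  constructor
  · rintro ⟨ξ, hξ, hrec⟩
    have hξ1 : ξ 1 ≠ 0 := fun h =>
      hξ (lp.ext (funext fun w => by simp [eq_mul_eigenCoeff hpos hrec w, h]))
    have hcoeff : eigenCoeff lam l = (ξ 1)⁻¹ • ⇑ξ :=
      funext fun w => by simp [eq_mul_eigenCoeff hpos hrec w, hξ1]
    exact hcoeff ▸ (lp.memℓp ξ).const_smul _
  · intro hmem
    refine ⟨⟨_, hmem⟩, fun h => ?_, mul_eigenCoeff_of_mul hpos⟩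
    simpa [eigenCoeff_one] using congr_arg (fun ξ : Hn n => ξ 1) h

/-- `λ ∈ ℂⁿ` is an eigenvalue for the adjoint tuple if and only if the
series `Σ_w |w(λ)|² · W(e,w)⁻²` converges. -/
theorem eigenvalue_iff_summable (n : ℕ) (hn : 2 ≤ n)
    (lam : Fin n → FreeMonoid (Fin n) → ℝ)
    (hpos : ∀ i w, 0 < lam i w) (hbdd : ∃ C : ℝ, ∀ i w, lam i w ≤ C)
    (T : Fin n → (Hn n →L[ℂ] Hn n))
    (hT : ∀ i w, T i (xi w) = (lam i w : ℂ) • xi (FreeMonoid.of i * w))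
    (l : Fin n → ℂ) :
    (∃ ξ : Hn n, ξ ≠ 0 ∧
        ∀ i, ContinuousLinearMap.adjoint (T i) ξ = (starRingEnd ℂ) (l i) • ξ) ↔
      Summable (fun w : FreeMonoid (Fin n) => ‖wl l w‖ ^ 2 * ((Wfun lam 1 w) ^ 2)⁻¹) :=
  eigenvalue_iff_summable_general n lam hpos T hT l
end
end

section
/- Suppose the weights are bounded away from zero, and for 1 ≤ i ≤ n set c_i = inf over words w of λ_{i,w}, so c_i > 0. Then every λ = (λ_1,…,λ_n) ∈ ℂ^n satisfying |λ_1|²/c_1² + … + |λ_n|²/c_n² < 1 is an eigenvalue for the adjoint tuple. -/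
noncomputable section

/-- Recursive eigenvector coefficients: `a_{iw} = conj(l i) a_w / λ_{i,w}`. -/
def coefAux {n : ℕ} (l : Fin n → ℂ) (lam : Fin n → FreeMonoid (Fin n) → ℝ) :
    List (Fin n) → ℂ
  | [] => 1
  | i :: w => (starRingEnd ℂ) (l i) / (lam i (FreeMonoid.ofList w)) * coefAux l lam w

lemma coefAux_norm_sq_le {n : ℕ} (l : Fin n → ℂ) (lam : Fin n → FreeMonoid (Fin n) → ℝ)
    (c : Fin n → ℝ) (hcpos : ∀ i, 0 < c i) (hcle : ∀ i w, c i ≤ lam i w)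
    (w : List (Fin n)) :
    ‖coefAux l lam w‖ ^ 2 ≤ (w.map (fun j => ‖l j‖ ^ 2 / (c j) ^ 2)).prod := by
  induction w with
  | nil => simp [coefAux]
  | cons i w ih =>
      have hlampos : (0:ℝ) < lam i (FreeMonoid.ofList w) :=
        lt_of_lt_of_le (hcpos i) (hcle i _)
      have h1 : ‖coefAux l lam (i :: w)‖ ^ 2
          = (‖l i‖ / lam i (FreeMonoid.ofList w)) ^ 2 * ‖coefAux l lam w‖ ^ 2 := by
        simp [coefAux, norm_mul, norm_div, mul_pow, Complex.norm_real,
          abs_of_pos hlampos, Real.norm_eq_abs]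
      rw [h1, List.map_cons, List.prod_cons]
      have h2 : (‖l i‖ / lam i (FreeMonoid.ofList w)) ^ 2 ≤ ‖l i‖ ^ 2 / (c i) ^ 2 := by
        rw [div_pow]
        apply div_le_div_of_nonneg_left (by positivity) (pow_pos (hcpos i) 2)
        exact pow_le_pow_left₀ (le_of_lt (hcpos i)) (hcle i _) 2
      exact mul_le_mul h2 ih (by positivity) (by positivity)

lemma summable_list_prod {n : ℕ} (h : Fin n → ℝ) (hpos : ∀ i, 0 ≤ h i)
    (hlt : (∑ i, h i) < 1) :
    Summable (fun w : List (Fin n) => (w.map h).prod) := by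
  have hr0 : (0:ℝ) ≤ ∑ i, h i := Finset.sum_nonneg fun i _ => hpos i
  rw [← (List.equivSigmaTuple (α := Fin n)).symm.summable_iff]
  have hfe : ∀ p : Σ k, Fin k → Fin n,
      ((fun w : List (Fin n) => (w.map h).prod) ∘ (List.equivSigmaTuple).symm) p
        = ∏ j, h (p.2 j) := by
    rintro ⟨k, f⟩
    simp [List.equivSigmaTuple, List.map_ofFn, List.prod_ofFn, Function.comp]
  rw [show ((fun w : List (Fin n) => (w.map h).prod) ∘ (List.equivSigmaTuple).symm)
      = fun p : Σ k, Fin k → Fin n => ∏ j, h (p.2 j) from funext hfe]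
  apply (summable_sigma_of_nonneg ?_).2
  · constructor
    · intro k; exact Summable.of_finite
    · have : ∀ k : ℕ, (∑' f : Fin k → Fin n, ∏ j, h (f j)) = (∑ i, h i) ^ k := by
        intro k
        rw [tsum_fintype, Fintype.sum_pow]
      rw [show (fun k : ℕ => ∑' f : Fin k → Fin n, ∏ j, h (f j))
          = fun k : ℕ => (∑ i, h i) ^ k from funext this]
      exact summable_geometric_of_lt_one hr0 hlt
  · rintro ⟨k, f⟩
    exact Finset.prod_nonneg fun j _ => hpos _

/-- Suppose the weights are bounded away from zero, and set
`c_i = inf_w λ_{i,w}`, so `c_i > 0`. Then every `λ ∈ ℂⁿ` with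
`|λ_1|²/c_1² + … + |λ_n|²/c_n² < 1` is an eigenvalue for the adjoint tuple. -/
theorem ellipse_of_eigenvalues (n : ℕ) (hn : 2 ≤ n)
    (lam : Fin n → FreeMonoid (Fin n) → ℝ)
    (hpos : ∀ i w, 0 < lam i w) (hbdd : ∃ C : ℝ, ∀ i w, lam i w ≤ C)
    (hbelow : ∃ ε : ℝ, 0 < ε ∧ ∀ i w, ε ≤ lam i w)
    (T : Fin n → (Hn n →L[ℂ] Hn n))
    (hT : ∀ i w, T i (xi w) = (lam i w : ℂ) • xi (FreeMonoid.of i * w))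
    (c : Fin n → ℝ) (hc : ∀ i, c i = ⨅ w : FreeMonoid (Fin n), lam i w) :
    (∀ i, 0 < c i) ∧
      ∀ l : Fin n → ℂ, (∑ i, ‖l i‖ ^ 2 / (c i) ^ 2) < 1 →
        ∃ ξ : Hn n, ξ ≠ 0 ∧
          ∀ i, ContinuousLinearMap.adjoint (T i) ξ = (starRingEnd ℂ) (l i) • ξ := by
  obtain ⟨ε, hε, hεle⟩ := hbelow
  have hcpos : ∀ i, 0 < c i := by
    intro i
    rw [hc i]
    exact lt_of_lt_of_le hε (le_ciInf fun w => hεle i w)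
  have hcle : ∀ i w, c i ≤ lam i w := by
    intro i w
    rw [hc i]
    exact ciInf_le ⟨ε, fun x ⟨w', hw'⟩ => hw' ▸ hεle i w'⟩ w
  refine ⟨hcpos, fun l hl => ?_⟩
  set h : Fin n → ℝ := fun j => ‖l j‖ ^ 2 / (c j) ^ 2 with hh
  have hhpos : ∀ j, 0 ≤ h j := fun j => by positivity
  -- coefficient function on the free monoid
  set a : FreeMonoid (Fin n) → ℂ := fun w => coefAux l lam (FreeMonoid.toList w) with ha
  have hsum : Summable fun w : FreeMonoid (Fin n) => ‖a w‖ ^ (2 : ℝ) := by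
    have key := summable_list_prod h hhpos hl
    have : Summable fun w : List (Fin n) => ‖coefAux l lam w‖ ^ (2:ℕ) :=
      key.of_nonneg_of_le (fun w => by positivity)
        (fun w => coefAux_norm_sq_le l lam c hcpos hcle w)
    have h2 : ∀ w : FreeMonoid (Fin n), ‖a w‖ ^ (2:ℝ) = ‖coefAux l lam w.toList‖ ^ (2:ℕ) := by
      intro w
      rw [ha]
      rw [← Real.rpow_natCast]
      norm_num
    rw [show (fun w : FreeMonoid (Fin n) => ‖a w‖ ^ (2:ℝ))
        = fun w => ‖coefAux l lam w.toList‖ ^ (2:ℕ) from funext h2]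
    exact this.comp_injective (FreeMonoid.toList (α := Fin n)).injective
  have hmem : Memℓp a 2 := by
    apply memℓp_gen
    simpa using hsum
  set ξ : Hn n := ⟨a, hmem⟩ with hξ
  have hξ_apply : ∀ w, (ξ : ∀ _ : FreeMonoid (Fin n), ℂ) w = a w := fun w => rfl
  refine ⟨ξ, ?_, ?_⟩
  · intro h0
    have : a 1 = 0 := by
      rw [← hξ_apply 1, h0]
      rfl
    rw [ha] at this
    simp [FreeMonoid.toList_one, coefAux] at this
  · intro i
    apply lp.ext
    funext w
    have hcoord : ∀ (v : FreeMonoid (Fin n)) (η : Hn n),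
        (η : ∀ _ : FreeMonoid (Fin n), ℂ) v = @inner ℂ _ _ (xi v) η := by
      intro v η
      rw [xi, lp.inner_single_left]
      simp
    have hlamne : (lam i w : ℂ) ≠ 0 := by
      exact_mod_cast ne_of_gt (hpos i w)
    have hrec : a (FreeMonoid.of i * w) = (starRingEnd ℂ) (l i) / (lam i w) * a w := by
      rfl
    have lhs : ((ContinuousLinearMap.adjoint (T i) ξ : Hn n) :
        ∀ _ : FreeMonoid (Fin n), ℂ) w = (starRingEnd ℂ) (l i) * a w := by
      rw [hcoord w, ContinuousLinearMap.adjoint_inner_right, hT i w, inner_smul_left,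
        ← hcoord (FreeMonoid.of i * w) ξ, hξ_apply, hrec, Complex.conj_ofReal]
      field_simp
    have rhs : (((starRingEnd ℂ) (l i) • ξ : Hn n) :
        ∀ _ : FreeMonoid (Fin n), ℂ) w = (starRingEnd ℂ) (l i) * a w := by
      rw [lp.coeFn_smul]
      simp [hξ_apply, smul_eq_mul]
    rw [lhs, rhs]
end
end

section
/- For λ = (λ_1,…,λ_n) ∈ ℂ^n, there exist bounded operators B_1,…,B_n on H_n with (λ_1 I − L_1)B_1 + … + (λ_n I − L_n)B_n = I if and only if |λ_1|² + … + |λ_n|² > 1. Equivalently, the joint right spectrum of the left creation operators L = (L_1,…,L_n) is the closed unit ball { λ ∈ ℂ^n : |λ_1|² + … + |λ_n|² ≤ 1 }. -/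
/-!
The creation operators form a row isometry, `L_i^* L_j = δ_ij`. If `|λ|² > 1`, the operator
`T = Σ conj(λ_i) L_i` satisfies `T^* T = |λ|²`, so `‖T‖ = |λ| < |λ|²` and
`Σ conj(λ_i) / |λ|² (λ_i − L_i) = 1 − T / |λ|²` is invertible by the Neumann series; this yields
the `B_i`. If `|λ|² < 1`, the vector `v = Σ_w conj(λ^w) ξ_w` (with `λ^w` the product of the `λ_i`
along the word `w`) is square summable and `L_i^* v = conj(λ_i) v`, so pairing
`Σ (λ_i − L_i) B_i v = v` with `v` gives `‖v‖² = 0`. Finally, right invertibility of the row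
`(λ_i − L_i)` is an open condition in `λ`, so it also fails on the unit sphere.
-/

noncomputable section

open scoped InnerProductSpace

section RightInvertibleRow

variable {ι A : Type*} [Fintype ι]

def RowRightInvertible [Semiring A] (a : ι → A) : Prop :=
  ∃ B : ι → A, ∑ i, a i * B i = 1

theorem RowRightInvertible.of_isUnit_sum_mul [Semiring A] {a c : ι → A}
    (h : IsUnit (∑ i, a i * c i)) : RowRightInvertible a := by
  obtain ⟨u, hu⟩ := h
  refine ⟨fun i => c i * ↑u⁻¹, ?_⟩
  simp only [← mul_assoc, ← Finset.sum_mul, ← hu, Units.mul_inv]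

theorem rowRightInvertible_neg_iff [Ring A] {a : ι → A} :
    RowRightInvertible (-a) ↔ RowRightInvertible a := by
  constructor <;> rintro ⟨B, hB⟩ <;> exact ⟨-B, by simpa using hB⟩

theorem isOpen_setOf_rowRightInvertible_smul_one_sub {𝕜 : Type*} [NormedField 𝕜] [NormedRing A]
    [NormedAlgebra 𝕜 A] [CompleteSpace A] (a : ι → A) :
    IsOpen {l : ι → 𝕜 | RowRightInvertible fun i => l i • (1 : A) - a i} := by
  refine isOpen_iff_forall_mem_open.mpr fun l₀ ⟨B, hB⟩ => ?_
  -- Right multiplication by the fixed `B` reduces right invertibility to invertibility.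
  refine ⟨{l | IsUnit (∑ i, (l i • (1 : A) - a i) * B i)},
    fun l hl => RowRightInvertible.of_isUnit_sum_mul hl,
    Units.isOpen.preimage (by fun_prop), by simp [hB]⟩

end RightInvertibleRow

section RowIsometry

variable {ι A : Type*} [Fintype ι] [DecidableEq ι] [CStarAlgebra A]

theorem norm_sum_smul_sq_le {L : ι → A} (hL : ∀ i j, star (L i) * L j = if i = j then 1 else 0)
    (c : ι → ℂ) : ‖∑ i, c i • L i‖ ^ 2 ≤ ∑ i, ‖c i‖ ^ 2 := by
  rcases subsingleton_or_nontrivial A with hA | hA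
  · simp [Subsingleton.elim (∑ i, c i • L i) 0]
    positivity
  have hstar : star (∑ i, c i • L i) * ∑ i, c i • L i = (∑ i, ‖c i‖ ^ 2 : ℝ) • (1 : A) := by
    simp only [star_sum, star_smul, Finset.sum_mul, Finset.mul_sum, smul_mul_smul_comm, hL,
      smul_ite, smul_zero, Finset.sum_ite_eq', Finset.mem_univ, if_true, Finset.sum_smul]
    refine Finset.sum_congr rfl fun i _ => ?_
    rw [RCLike.star_def, Complex.conj_mul', ← Complex.ofReal_pow, Complex.coe_smul]
  rw [sq, ← CStarRing.norm_star_mul_self, hstar, norm_smul, CStarRing.norm_one, mul_one,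
    Real.norm_of_nonneg (by positivity)]

theorem rowRightInvertible_smul_one_sub_of_one_lt {L : ι → A}
    (hL : ∀ i j, star (L i) * L j = if i = j then 1 else 0) {l : ι → ℂ}
    (hl : 1 < ∑ i, ‖l i‖ ^ 2) : RowRightInvertible fun i => l i • (1 : A) - L i := by
  set S := ∑ i, ‖l i‖ ^ 2
  have hS : 0 < S := one_pos.trans hl
  set T := ∑ i, star (l i) • L i
  have hT : ‖(S⁻¹ : ℂ) • T‖ < 1 := by
    have hTS : ‖T‖ ^ 2 < S ^ 2 := by
      calc ‖T‖ ^ 2 ≤ ∑ i, ‖star (l i)‖ ^ 2 := norm_sum_smul_sq_le hL _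
        _ = S := by simp only [norm_star, S]
        _ < S ^ 2 := by nlinarith
    rw [norm_smul, norm_inv, Complex.norm_real, Real.norm_of_nonneg hS.le,
      inv_mul_lt_one₀ hS]
    exact lt_of_pow_lt_pow_left₀ 2 hS.le hTS
  refine RowRightInvertible.of_isUnit_sum_mul (c := fun i => (star (l i) / S : ℂ) • 1) ?_
  convert (Units.oneSub _ hT).isUnit using 1
  have hsum : ∑ i, (S : ℂ)⁻¹ * star (l i) * l i = 1 := by
    simp only [mul_assoc, ← Finset.mul_sum, RCLike.star_def, Complex.conj_mul']
    exact_mod_cast inv_mul_cancel₀ hS.ne'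
  simp only [Units.val_oneSub, mul_smul_one, smul_sub, smul_smul, Finset.sum_sub_distrib,
    ← Finset.sum_smul, T, Finset.smul_sum, div_eq_inv_mul, hsum, one_smul]

end RowIsometry

theorem not_rowRightInvertible_smul_one_sub_of_inner_eq {ι E : Type*} [Fintype ι]
    [NormedAddCommGroup E] [InnerProductSpace ℂ E] {L : ι → E →L[ℂ] E} {l : ι → ℂ} {v : E}
    (hv : v ≠ 0) (hvL : ∀ i y, ⟪v, L i y⟫_ℂ = l i * ⟪v, y⟫_ℂ) :
    ¬ RowRightInvertible fun i => l i • (1 : E →L[ℂ] E) - L i := by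
  rintro ⟨B, hB⟩
  have : ⟪v, v⟫_ℂ = 0 := by
    calc ⟪v, v⟫_ℂ = ⟪v, (∑ i, (l i • (1 : E →L[ℂ] E) - L i) * B i) v⟫_ℂ := by rw [hB]; rfl
      _ = 0 := by simp [hvL]
  exact hv (inner_self_eq_zero.mp this)

theorem setOf_sum_norm_sq_le_one_subset_closure {ι E : Type*} [Fintype ι] [NormedAddCommGroup E]
    [NormedSpace ℝ E] :
    {l : ι → E | ∑ i, ‖l i‖ ^ 2 ≤ 1} ⊆ closure {l | ∑ i, ‖l i‖ ^ 2 < 1} := by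
  rintro l (hl : ∑ i, ‖l i‖ ^ 2 ≤ 1)
  have hlim : Filter.Tendsto (fun t : ℝ => t • l) (nhdsWithin 1 (Set.Iio 1)) (nhds l) := by
    have : Continuous fun t : ℝ => t • l := by fun_prop
    simpa using (this.tendsto 1).mono_left nhdsWithin_le_nhds
  refine mem_closure_of_tendsto hlim ?_
  filter_upwards [Ioo_mem_nhdsLT zero_lt_one] with t ⟨ht0, ht1⟩
  calc ∑ i, ‖(t • l) i‖ ^ 2 = t ^ 2 * ∑ i, ‖l i‖ ^ 2 := by
        simp [norm_smul, mul_pow, Finset.mul_sum, abs_of_pos ht0]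
    _ < 1 := by nlinarith

theorem FreeMonoid.of_mul_eq_of_mul_iff {α : Type*} {a b : α} {u w : FreeMonoid α} :
    of a * u = of b * w ↔ a = b ∧ u = w := by
  rw [← toList.injective.eq_iff, toList_of_mul, toList_of_mul, List.cons.injEq,
    toList.injective.eq_iff]

theorem FreeMonoid.summable_lift_of_sum_lt_one {α : Type*} [Fintype α] {q : α → ℝ}
    (hq : ∀ a, 0 ≤ q a) (hq1 : ∑ a, q a < 1) : Summable (lift q) := by
  -- Grouping words by length, the words of length `k` contribute `(∑ a, q a) ^ k`.
  have hlen : ∀ k (v : Fin k → α), lift q (ofList (List.ofFn v)) = ∏ j, q (v j) := by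
    intro k v
    rw [lift_apply, toList_ofList, List.map_ofFn, List.prod_ofFn]
    rfl
  rw [← toList.symm.summable_iff, ← List.equivSigmaTuple.symm.summable_iff]
  refine (summable_sigma_of_nonneg ?_).mpr ⟨fun _ => Summable.of_finite, ?_⟩
  · rintro ⟨k, v⟩
    show 0 ≤ lift q (ofList (List.ofFn v))
    rw [hlen]
    exact Finset.prod_nonneg fun j _ => hq (v j)
  · have hfiber : ∀ k, ∑' v : Fin k → α, lift q (ofList (List.ofFn v)) = (∑ a, q a) ^ k := by
      simp only [hlen, tsum_fintype, Fintype.sum_pow, implies_true]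
    exact (summable_geometric_of_lt_one (Finset.sum_nonneg fun a _ => hq a) hq1).congr
      fun k => (hfiber k).symm

section Fock

variable {n : ℕ}

theorem inner_xi_left (w : FreeMonoid (Fin n)) (f : Hn n) : ⟪xi w, f⟫_ℂ = f w := by
  simp [xi, lp.inner_single_left]

theorem inner_xi_xi (w v : FreeMonoid (Fin n)) : ⟪xi w, xi v⟫_ℂ = if w = v then 1 else 0 := by
  rw [inner_xi_left]
  simp [xi, lp.single_apply, Pi.single_apply]

theorem Hn.ext_inner_xi {f g : Hn n} (h : ∀ w, ⟪xi w, f⟫_ℂ = ⟪xi w, g⟫_ℂ) : f = g :=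
  lp.ext (funext fun w => by simpa [inner_xi_left] using h w)

theorem Hn.ext_xi {F : Type*} [AddCommMonoid F] [Module ℂ F] [TopologicalSpace F] [T2Space F]
    {f g : Hn n →L[ℂ] F} (h : ∀ w, f (xi w) = g (xi w)) : f = g :=
  lp.ext_continuousLinearMap ENNReal.ofNat_ne_top fun w => ContinuousLinearMap.ext_ring (h w)

end Fock

section Creation

variable {n : ℕ} {L : Fin n → Hn n →L[ℂ] Hn n}

theorem star_creation_mul_creation (hL : ∀ i w, L i (xi w) = xi (FreeMonoid.of i * w))
    (i j : Fin n) : star (L i) * L j = if i = j then 1 else 0 := by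
  refine Hn.ext_xi fun w => Hn.ext_inner_xi fun u => ?_
  rw [mul_apply_eq_comp, ContinuousLinearMap.star_eq_adjoint,
    ContinuousLinearMap.adjoint_inner_right, hL, hL, inner_xi_xi]
  simp only [FreeMonoid.of_mul_eq_of_mul_iff]
  by_cases hij : i = j
  · simp only [hij, true_and, if_true, one_apply_eq_self, inner_xi_xi]
  · simp [hij]

theorem exists_ne_zero_inner_creation_eq (hL : ∀ i w, L i (xi w) = xi (FreeMonoid.of i * w))
    {l : Fin n → ℂ} (hl : ∑ i, ‖l i‖ ^ 2 < 1) :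
    ∃ v : Hn n, v ≠ 0 ∧ ∀ i y, ⟪v, L i y⟫_ℂ = l i * ⟪v, y⟫_ℂ := by
  set c := FreeMonoid.lift l
  have hmem : Memℓp (fun w => star (c w)) 2 := by
    refine memℓp_gen ?_
    have hnorm : ∀ w,
        ‖star (c w)‖ ^ (2 : ENNReal).toReal = FreeMonoid.lift (fun i => ‖l i‖ ^ 2) w := by
      intro w
      simpa [Complex.normSq_eq_norm_sq, Function.comp_def]
        using FreeMonoid.hom_map_lift (Complex.normSq : ℂ →* ℝ) l w
    simpa only [hnorm] using FreeMonoid.summable_lift_of_sum_lt_one (fun i => sq_nonneg _) hl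
  refine ⟨⟨_, hmem⟩, fun h => ?_, fun i y => ?_⟩
  · simpa [c] using congrArg (fun f : Hn n => f 1) h
  · have := Hn.ext_xi (f := (innerSL ℂ (⟨_, hmem⟩ : Hn n)).comp (L i))
      (g := l i • innerSL ℂ ⟨_, hmem⟩) fun w => ?_
    · simpa using congrArg (fun f => f y) this
    · simp only [ContinuousLinearMap.comp_apply, innerSL_apply_apply, hL]
      rw [← inner_conj_symm, inner_xi_left, smul_apply, innerSL_apply_apply,
        ← inner_conj_symm, inner_xi_left]
      simp [c]

end Creation

theorem right_spectrum_of_creation_operators_general (n : ℕ)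
    (L : Fin n → (Hn n →L[ℂ] Hn n))
    (hL : ∀ i w, L i (xi w) = xi (FreeMonoid.of i * w)) :
    (∀ l : Fin n → ℂ,
        (∃ B : Fin n → (Hn n →L[ℂ] Hn n),
          ∑ i, (l i • (1 : Hn n →L[ℂ] Hn n) - L i) * B i = 1) ↔
          1 < ∑ i, ‖l i‖ ^ 2) ∧
      {l : Fin n → ℂ | ¬ ∃ B : Fin n → (Hn n →L[ℂ] Hn n),
          ∑ i, (L i - l i • (1 : Hn n →L[ℂ] Hn n)) * B i = 1} =
        {l : Fin n → ℂ | ∑ i, ‖l i‖ ^ 2 ≤ 1} := by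
  set solvable :=
    {l : Fin n → ℂ | RowRightInvertible fun i => l i • (1 : Hn n →L[ℂ] Hn n) - L i}
  have hdisj : Disjoint solvable {l | ∑ i, ‖l i‖ ^ 2 < 1} :=
    Set.disjoint_left.mpr fun l hsol hl =>
      have ⟨_, hv, hvL⟩ := exists_ne_zero_inner_creation_eq hL hl
      not_rowRightInvertible_smul_one_sub_of_inner_eq hv hvL hsol
  have hsolv (l : Fin n → ℂ) : l ∈ solvable ↔ 1 < ∑ i, ‖l i‖ ^ 2 := by
    refine ⟨fun hsol => ?_,
      rowRightInvertible_smul_one_sub_of_one_lt (star_creation_mul_creation hL)⟩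
    by_contra! hle
    have hdisj' := hdisj.closure_right (isOpen_setOf_rowRightInvertible_smul_one_sub L)
    exact Set.disjoint_left.mp hdisj' hsol (setOf_sum_norm_sq_le_one_subset_closure hle)
  refine ⟨hsolv, Set.ext fun l => ?_⟩
  have hneg : (fun i => L i - l i • (1 : Hn n →L[ℂ] Hn n)) = -fun i => l i • 1 - L i := by
    ext1; simp
  change ¬ RowRightInvertible _ ↔ _
  rw [hneg, rowRightInvertible_neg_iff]
  exact (hsolv l).not.trans not_lt

/-- For `λ ∈ ℂⁿ`, there are bounded operators `B_1, …, B_n` with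
`(λ_1 I − L_1)B_1 + … + (λ_n I − L_n)B_n = I` if and only if `Σ_i |λ_i|² > 1`;
equivalently, the joint right spectrum of the left creation operators is the closed
unit ball of `ℂⁿ`. -/
theorem right_spectrum_of_creation_operators (n : ℕ) (hn : 2 ≤ n)
    (L : Fin n → (Hn n →L[ℂ] Hn n))
    (hL : ∀ i w, L i (xi w) = xi (FreeMonoid.of i * w)) :
    (∀ l : Fin n → ℂ,
        (∃ B : Fin n → (Hn n →L[ℂ] Hn n),
          ∑ i, (l i • (1 : Hn n →L[ℂ] Hn n) - L i) * B i = 1) ↔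
          1 < ∑ i, ‖l i‖ ^ 2) ∧
      {l : Fin n → ℂ | ¬ ∃ B : Fin n → (Hn n →L[ℂ] Hn n),
          ∑ i, (L i - l i • (1 : Hn n →L[ℂ] Hn n)) * B i = 1} =
        {l : Fin n → ℂ | ∑ i, ‖l i‖ ^ 2 ≤ 1} :=
  right_spectrum_of_creation_operators_general n L hL
end
end

section
/- If λ = (λ_1,…,λ_n) ∈ ℂ^n satisfies |λ_j| ≥ 1 for some 1 ≤ j ≤ n, then there exist no bounded operators B_1,…,B_n on H_n with B_i (L_j − λ_j I) = δ_{ij} I for all 1 ≤ i, j ≤ n. Equivalently, the joint left spectrum of the left creation operators L = (L_1,…,L_n) contains the complement in ℂ^n of the open unit polydisc { λ ∈ ℂ^n : |λ_i| < 1 for all i }. -/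
noncomputable section

/-!
Fix `i ≠ j` (possible as `n ≥ 2`). The relation `B_i (L_j - λ_j) = 0` gives
`B_i ξ_{j^m w} = λ_j^m B_i ξ_w`. The words `j^m w` are distinct, so by Bessel's inequality the
left-hand side tends weakly to `0` as `m → ∞`, while `|λ_j| ≥ 1` keeps the right-hand side from
shrinking; hence `B_i ξ_w = 0` for every `w`. But then `B_i (L_i - λ_i) ξ_e = 0 ≠ ξ_e`.
-/

open Filter Topology
open scoped InnerProductSpace

section Hilbert

variable {𝕜 E F ι : Type*} [RCLike 𝕜]
  [NormedAddCommGroup E] [InnerProductSpace 𝕜 E] [NormedAddCommGroup F] [InnerProductSpace 𝕜 F]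

theorem Orthonormal.tendsto_inner_cofinite_zero {v : ι → E} (hv : Orthonormal 𝕜 v) (x : E) :
    Tendsto (fun i => ⟪x, v i⟫_𝕜) cofinite (𝓝 0) := by
  rw [tendsto_zero_iff_norm_tendsto_zero]
  have hsq : Tendsto (fun i => ‖⟪v i, x⟫_𝕜‖ ^ 2) cofinite (𝓝 0) :=
    (hv.inner_products_summable x).tendsto_cofinite_zero
  simpa [Real.sqrt_sq, norm_inner_symm] using hsq.sqrt

theorem eq_zero_of_tendsto_pow_mul {c a : 𝕜} (hc : 1 ≤ ‖c‖)
    (h : Tendsto (fun m : ℕ => c ^ m * a) atTop (𝓝 0)) : a = 0 := by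
  have hle : ∀ m : ℕ, ‖a‖ ≤ ‖c ^ m * a‖ := fun m => by
    rw [norm_mul, norm_pow]
    exact le_mul_of_one_le_left (norm_nonneg a) (one_le_pow₀ hc)
  exact norm_le_zero_iff.mp (ge_of_tendsto' (tendsto_zero_iff_norm_tendsto_zero.mp h) hle)

theorem Orthonormal.eq_zero_of_apply_eq_pow_smul [CompleteSpace E] [CompleteSpace F]
    {v : ι → E} (hv : Orthonormal 𝕜 v) {u : ℕ → ι} (hu : Function.Injective u)
    (T : E →L[𝕜] F) {c : 𝕜} (hc : 1 ≤ ‖c‖) {y : F} (h : ∀ m, T (v (u m)) = c ^ m • y) :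
    y = 0 := by
  rw [← inner_self_eq_zero (𝕜 := 𝕜)]
  refine eq_zero_of_tendsto_pow_mul hc ?_
  have hlim := ((hv.tendsto_inner_cofinite_zero (T.adjoint y)).comp
    (Nat.cofinite_eq_atTop ▸ hu.tendsto_cofinite))
  refine hlim.congr fun m => ?_
  simp [ContinuousLinearMap.adjoint_inner_left, h, inner_smul_right]

end Hilbert

theorem mul_pow_eq_pow_smul_of_mul_eq_smul {R A : Type*} [CommSemiring R] [Semiring A]
    [Algebra R A] {b a : A} {c : R} (h : b * a = c • b) (m : ℕ) : b * a ^ m = c ^ m • b := by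
  induction m with
  | zero => simp
  | succ m ih => rw [pow_succ, ← mul_assoc, ih, smul_mul_assoc, h, smul_smul, ← pow_succ]

theorem FreeMonoid.length_of_pow {α : Type*} (a : α) (m : ℕ) : (of a ^ m).length = m := by
  induction m with
  | zero => simp
  | succ m ih => rw [pow_succ, length_mul, ih, length_of]

theorem FreeMonoid.injective_of_pow_mul {α : Type*} (a : α) (w : FreeMonoid α) :
    Function.Injective fun m : ℕ => of a ^ m * w := fun k m hkm => by
  simpa [length_mul, length_of_pow] using congrArg length hkm

theorem orthonormal_xi (n : ℕ) : Orthonormal ℂ (xi : FreeMonoid (Fin n) → Hn n) := by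
  convert (default : HilbertBasis (FreeMonoid (Fin n)) ℂ (Hn n)).orthonormal
  ext1 w
  exact ((default : HilbertBasis _ ℂ (Hn n)).repr_symm_single w).symm

section Creation

variable {n : ℕ} {j : Fin n} {S : Hn n →L[ℂ] Hn n} (hS : ∀ w, S (xi w) = xi (FreeMonoid.of j * w))
include hS

theorem pow_apply_xi_of_apply_xi (m : ℕ) (w : FreeMonoid (Fin n)) :
    (S ^ m) (xi w) = xi (FreeMonoid.of j ^ m * w) := by
  induction m with
  | zero => simp
  | succ m ih => rw [pow_succ', mul_apply_eq_comp, ih, hS, ← mul_assoc, ← pow_succ']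

theorem apply_xi_eq_zero_of_mul_sub_smul_eq_zero {c : ℂ} (hc : 1 ≤ ‖c‖)
    {B : Hn n →L[ℂ] Hn n} (hB : B * (S - c • 1) = 0) (w : FreeMonoid (Fin n)) :
    B (xi w) = 0 := by
  have hBS : B * S = c • B := by
    rwa [mul_sub, mul_smul_comm, mul_one, sub_eq_zero] at hB
  refine (orthonormal_xi n).eq_zero_of_apply_eq_pow_smul
    (FreeMonoid.injective_of_pow_mul j w) B hc fun m => ?_
  rw [← pow_apply_xi_of_apply_xi hS, ← mul_apply_eq_comp,
    mul_pow_eq_pow_smul_of_mul_eq_smul hBS, smul_apply]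

end Creation

theorem not_exists_left_inverse_creation_sub_of_one_le_norm {n : ℕ} (hn : 2 ≤ n)
    {L : Fin n → (Hn n →L[ℂ] Hn n)} (hL : ∀ i w, L i (xi w) = xi (FreeMonoid.of i * w))
    {l : Fin n → ℂ} {j : Fin n} (hj : 1 ≤ ‖l j‖) :
    ¬ ∃ B : Fin n → (Hn n →L[ℂ] Hn n),
      ∀ i j, B i * (L j - l j • (1 : Hn n →L[ℂ] Hn n)) = if i = j then 1 else 0 := by
  rintro ⟨B, hB⟩
  have : Nontrivial (Fin n) := Fin.nontrivial_iff_two_le.mpr hn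
  obtain ⟨i, hij⟩ := exists_ne j
  have hBi : ∀ w, B i (xi w) = 0 :=
    apply_xi_eq_zero_of_mul_sub_smul_eq_zero (hL j) hj (by simpa [hij] using hB i j)
  have hone := congrArg (fun T : Hn n →L[ℂ] Hn n => T (xi 1)) (hB i i)
  simp only [if_pos, mul_apply_eq_comp, sub_apply, smul_apply, hL] at hone
  exact (orthonormal_xi n).ne_zero 1 (by simpa [hBi] using hone.symm)

/-- If `|λ_j| ≥ 1` for some `j`, then there are no bounded operators
`B_1, …, B_n` with `B_i (L_j − λ_j I) = δ_{ij} I` for all `i, j`; equivalently, the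
joint left spectrum of the left creation operators contains the complement of the
open unit polydisc. -/
theorem left_spectrum_of_creation_operators (n : ℕ) (hn : 2 ≤ n)
    (L : Fin n → (Hn n →L[ℂ] Hn n))
    (hL : ∀ i w, L i (xi w) = xi (FreeMonoid.of i * w)) :
    (∀ l : Fin n → ℂ, (∃ j, 1 ≤ ‖l j‖) →
        ¬ ∃ B : Fin n → (Hn n →L[ℂ] Hn n),
          ∀ i j, B i * (L j - l j • (1 : Hn n →L[ℂ] Hn n)) =
            if i = j then 1 else 0) ∧
      {l : Fin n → ℂ | ∀ i, ‖l i‖ < 1}ᶜ ⊆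
        {l : Fin n → ℂ | ¬ ∃ B : Fin n → (Hn n →L[ℂ] Hn n),
          ∀ i j, B i * (L j - l j • (1 : Hn n →L[ℂ] Hn n)) =
            if i = j then 1 else 0} := by
  refine ⟨fun l ⟨j, hj⟩ => not_exists_left_inverse_creation_sub_of_one_le_norm hn hL hj,
    fun l hl => ?_⟩
  obtain ⟨j, hj⟩ : ∃ j, 1 ≤ ‖l j‖ := by simpa using hl
  exact not_exists_left_inverse_creation_sub_of_one_le_norm hn hL hj
end
end
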